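/- Let n and i be positive integers with i < n and gcd(n, i) = 1. Then the ℂ-linear span of all products of at most 2n − 2 elements of {J_n^i, (J_nᵀ)^{n−i}} (including the empty product, the identity matrix) is all of M_n(ℂ). -/

import Mathlib

/-!
`J^d` and `(Jᵀ)^(n-d)` are the two halves of the permutation matrix of the rotation `x ↦ x + d`
of `Fin n`: row `x` of the first is `e_{x+d}` if `x + d < n` and zero otherwise, the second is the
complementary half. Following the orbit of `a` and choosing at each step the half that moves the
current point gives a word whose row `x` is `e_{x+kd}` if the orbit of `x` wraps around at exactly
the same steps as that of `a`, and zero otherwise. Two orbits with the same wrapping pattern keep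
their distance `x - a` in `ℤ`; as `gcd(n, d) = 1`, each orbit passes through `0` within `n - 1`
steps, which forces `x = a`. So the word of length `n - 1 + s` is the matrix unit
`E_{a, a + (n-1+s)d}`, and every matrix unit arises this way with `s < n`.
-/

open Matrix

def jordan (n : ℕ) : Matrix (Fin n) (Fin n) ℂ :=
  Matrix.of fun a b => if (a : ℕ) + 1 = (b : ℕ) then 1 else 0

/-- `L_k(S)`: the ℂ-linear span of all words in `S` of length at most `k`
(including the empty rotWord, the identity matrix). -/
noncomputable def wordSpan (n k : ℕ) (S : Set (Matrix (Fin n) (Fin n) ℂ)) :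
    Submodule ℂ (Matrix (Fin n) (Fin n) ℂ) :=
  Submodule.span ℂ {M | ∃ w : List (Matrix (Fin n) (Fin n) ℂ),
    w.length ≤ k ∧ (∀ x ∈ w, x ∈ S) ∧ M = w.prod}

lemma jordan_pow_apply (n k : ℕ) (x y : Fin n) :
    (jordan n ^ k) x y = if (x : ℕ) + k = y then 1 else 0 := by
  induction k generalizing y with
  | zero => simp [one_apply, Fin.ext_iff]
  | succ k ih =>
    simp only [pow_succ, mul_apply, ih]
    simp only [jordan, of_apply, mul_ite, mul_one, mul_zero]
    by_cases h : (x : ℕ) + k < n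
    · rw [Finset.sum_eq_single ⟨x + k, h⟩]
      · simp [add_assoc]
      · intro b _ hb; simp [Fin.ext_iff] at hb ⊢; omega
      · simp
    · rw [Finset.sum_eq_zero] <;> intros <;> simp_all <;> omega

namespace Fin

lemma val_nsmul {n : ℕ} [NeZero n] (t : ℕ) (d : Fin n) :
    ((t • d : Fin n) : ℕ) = t * d % n := by
  induction t with
  | zero => simp
  | succ t ih => rw [succ_nsmul, val_add, ih, Nat.mod_add_mod, Nat.succ_mul]

lemma exists_lt_add_nsmul_eq {n : ℕ} [NeZero n] {d : Fin n} (hd : n.gcd d = 1) (a b : Fin n) :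
    ∃ t < n, a + t • d = b := by
  have hinj : Function.Injective fun t : Fin n => a + (t : ℕ) • d := by
    intro t t' h
    have hmod : (t : ℕ) * d ≡ t' * d [MOD n] := by
      simpa [Nat.ModEq, Fin.ext_iff, val_nsmul] using h
    exact Fin.ext ((Nat.ModEq.cancel_right_of_coprime hd hmod).eq_of_lt_of_lt t.2 t'.2)
  obtain ⟨t, ht⟩ := Finite.injective_iff_surjective.1 hinj b
  exact ⟨t, t.2, ht⟩

end Fin

section Rotation

variable {n : ℕ} (d : Fin n)

def rotLetter (a : Fin n) : Matrix (Fin n) (Fin n) ℂ :=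
  if (a : ℕ) + d < n then jordan n ^ (d : ℕ) else (jordan n)ᵀ ^ (n - d)

def rotWord : ℕ → Fin n → List (Matrix (Fin n) (Fin n) ℂ)
  | 0, _ => []
  | k + 1, a => rotLetter d a :: rotWord k (a + d)

lemma length_rotWord (k : ℕ) (a : Fin n) : (rotWord d k a).length = k := by
  induction k generalizing a with
  | zero => rfl
  | succ k ih => simp [rotWord, ih]

lemma mem_of_mem_rotWord {k : ℕ} {a : Fin n} {M : Matrix (Fin n) (Fin n) ℂ}
    (hM : M ∈ rotWord d k a) :
    M ∈ ({jordan n ^ (d : ℕ), (jordan n)ᵀ ^ (n - d)} : Set (Matrix (Fin n) (Fin n) ℂ)) := by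
  induction k generalizing a with
  | zero => simp [rotWord] at hM
  | succ k ih =>
    rcases List.mem_cons.1 hM with rfl | hM
    · unfold rotLetter; split_ifs <;> simp
    · exact ih hM

lemma rotLetter_row (a x : Fin n) :
    rotLetter d a x =
      if ((x : ℕ) + d < n ↔ (a : ℕ) + d < n) then Pi.single (x + d) 1 else 0 := by
  ext y
  have hy := Fin.val_add_eq_ite x d
  unfold rotLetter
  split_ifs <;>
    simp only [jordan_pow_apply, ← transpose_pow, transpose_apply, Pi.single_apply, Pi.zero_apply,
      Fin.ext_iff, hy] <;>
    split_ifs <;> first | rfl | (exfalso; omega)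

variable [NeZero n]

def SameWraps (k : ℕ) (x a : Fin n) : Prop :=
  ∀ t < k, ((x + t • d : Fin n) : ℕ) + d < n ↔ ((a + t • d : Fin n) : ℕ) + d < n

lemma sameWraps_succ (k : ℕ) (x a : Fin n) :
    SameWraps d (k + 1) x a ↔
      ((x : ℕ) + d < n ↔ (a : ℕ) + d < n) ∧ SameWraps d k (x + d) (a + d) := by
  simp only [SameWraps, Nat.forall_lt_succ_left, zero_nsmul, add_zero, succ_nsmul', add_assoc]

open Classical in
lemma rotWord_prod_row (k : ℕ) (a x : Fin n) :
    (rotWord d k a).prod x = if SameWraps d k x a then Pi.single (x + k • d) 1 else 0 := by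
  induction k generalizing a x with
  | zero => ext y; simp [rotWord, SameWraps, one_apply, Pi.single_apply, eq_comm]
  | succ k ih =>
    have hrow : (rotLetter d a * (rotWord d k (a + d)).prod) x =
        rotLetter d a x ᵥ* (rotWord d k (a + d)).prod := rfl
    rw [rotWord, List.prod_cons, hrow, rotLetter_row, sameWraps_succ, succ_nsmul', ← add_assoc]
    by_cases hx : (x : ℕ) + d < n ↔ (a : ℕ) + d < n
    · simp only [hx, if_true, true_and, single_one_vecMul, row, ih]
    · simp [hx]

variable {d} in
lemma SameWraps.sub_eq {k : ℕ} {x a : Fin n} (h : SameWraps d k x a) {t : ℕ} (ht : t ≤ k) :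
    ((x + t • d : Fin n) : ℤ) - (a + t • d : Fin n) = x - a := by
  induction t with
  | zero => simp
  | succ t ih =>
    have hwrap := h t (by omega)
    rw [succ_nsmul, ← add_assoc, ← add_assoc, Fin.val_add_eq_ite (x + t • d),
      Fin.val_add_eq_ite (a + t • d)]
    have := ih (by omega)
    split_ifs <;> push_cast <;> omega

variable {d} in
lemma SameWraps.eq {x a : Fin n} (hd : n.gcd d = 1) (h : SameWraps d (n - 1) x a) : x = a := by
  obtain ⟨t, ht, hta⟩ := Fin.exists_lt_add_nsmul_eq hd a 0
  obtain ⟨s, hs, hsx⟩ := Fin.exists_lt_add_nsmul_eq hd x 0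
  have hax := h.sub_eq (t := t) (by omega)
  have hxa := h.sub_eq (t := s) (by omega)
  rw [hta] at hax
  rw [hsx] at hxa
  simp only [Fin.val_zero, Nat.cast_zero] at hax hxa
  generalize ((x + t • d : Fin n) : ℕ) = p at hax
  generalize ((a + s • d : Fin n) : ℕ) = q at hxa
  exact Fin.ext (by omega)

lemma rotWord_prod_eq_single (hd : n.gcd d = 1) (s : ℕ) (a : Fin n) :
    (rotWord d (n - 1 + s) a).prod = single a (a + (n - 1 + s) • d) 1 := by
  ext x y
  rw [rotWord_prod_row]
  by_cases hx : x = a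
  · subst hx
    simp [SameWraps, single_apply, Pi.single_apply, eq_comm]
  · rw [if_neg fun h => hx (SameWraps.eq hd fun t ht => h t (by omega))]
    simp [Ne.symm hx]

lemma single_mem_wordSpan (hd : n.gcd d = 1) (r c : Fin n) :
    single r c 1 ∈ wordSpan n (2 * n - 2) {jordan n ^ (d : ℕ), (jordan n)ᵀ ^ (n - d)} := by
  obtain ⟨s, hs, hsc⟩ := Fin.exists_lt_add_nsmul_eq hd (r + (n - 1) • d) c
  refine Submodule.subset_span ⟨rotWord d (n - 1 + s) r, by rw [length_rotWord]; omega,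
    fun M hM => mem_of_mem_rotWord d hM, ?_⟩
  rw [rotWord_prod_eq_single d hd, add_nsmul, ← add_assoc, hsc]

end Rotation

theorem stmt_16_general (n i : ℕ) (hin : i < n) (hgcd : Nat.gcd n i = 1) :
    wordSpan n (2 * n - 2) {jordan n ^ i, (jordan n)ᵀ ^ (n - i)} = ⊤ := by
  have : NeZero n := ⟨by omega⟩
  rw [eq_top_iff, ← (stdBasis ℂ (Fin n) (Fin n)).span_eq, Submodule.span_le]
  rintro _ ⟨⟨r, c⟩, rfl⟩
  rw [stdBasis_eq_single]
  exact single_mem_wordSpan ⟨i, hin⟩ hgcd r c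

/-- For `0 < i < n` with `gcd(n, i) = 1`, the span of words of length at most `2n - 2`
in `{J_n^i, (J_nᵀ)^{n-i}}` is all of `M_n(ℂ)`. -/
theorem stmt_16 (n i : ℕ) (hi : 0 < i) (hin : i < n) (hgcd : Nat.gcd n i = 1) :
    wordSpan n (2 * n - 2) {jordan n ^ i, (jordan n)ᵀ ^ (n - i)} = ⊤ :=
  stmt_16_general n i hin hgcd
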